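/- Let g be a finite-dimensional Lie bialgebra with dual Lie bialgebra g*, and let k be a Lie subalgebra of g. Let ⟨k⊥⟩ be the Lie subalgebra of g* generated by the annihilator k⊥. Then ⟨k⊥⟩⊥ (the annihilator in g of ⟨k⊥⟩) equals the maximal subspace of k which is simultaneously a Lie subalgebra and a Lie coideal of g. -/
import Mathlib


/- STATEMENT 5: for a finite-dimensional Lie bialgebra `g` and a Lie subalgebra `k ⊆ g`,
   the annihilator (in `g`) of the Lie subalgebra `⟨k⊥⟩` of `g*` generated by `k⊥` equals
   the coisotropic interior of `k`, i.e. the maximal subspace of `k` which is simultaneously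
   a Lie subalgebra and a Lie coideal of `g`. -/

open scoped TensorProduct

namespace GQDP

variable (K : Type*) [Field K] (g : Type*) [LieRing g] [LieAlgebra K g]

/-- The "tensor product" of two subspaces of `g`, as a subspace of `g ⊗ g`. -/
def tsub (A B : Submodule K g) : Submodule K (g ⊗[K] g) :=
  Submodule.span K {z | ∃ a ∈ A, ∃ b ∈ B, z = a ⊗ₜ[K] b}

/-- The adjoint action of `x ∈ g` on `g ⊗ g` (acting diagonally). -/
noncomputable def adT (x : g) : g ⊗[K] g →ₗ[K] g ⊗[K] g :=
  LinearMap.rTensor g (LieAlgebra.ad K g x) + LinearMap.lTensor g (LieAlgebra.ad K g x)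

/-- The bracket on `g* = Dual K g` dual to the cobracket `δ`: `[f,h](x) = (f ⊗ h)(δ x)`. -/
noncomputable def dualBracket (δ : g →ₗ[K] g ⊗[K] g) (f h : Module.Dual K g) :
    Module.Dual K g :=
  (TensorProduct.lid K K).toLinearMap ∘ₗ TensorProduct.map f h ∘ₗ δ

/-- The Lie subalgebra `⟨V⟩` of `g*` generated by a subspace `V ⊆ g*`: the smallest
    subspace containing `V` and closed under the dual bracket. -/
noncomputable def dualLieSpan (δ : g →ₗ[K] g ⊗[K] g) (V : Submodule K (Module.Dual K g)) :
    Submodule K (Module.Dual K g) :=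
  sInf {W | V ≤ W ∧ ∀ f ∈ W, ∀ h ∈ W, dualBracket K g δ f h ∈ W}

section Aux

variable {K g}

lemma tmul_mem_tsub {A B : Submodule K g} {a b : g} (ha : a ∈ A) (hb : b ∈ B) :
    a ⊗ₜ[K] b ∈ tsub K g A B :=
  Submodule.subset_span ⟨a, ha, b, hb, rfl⟩

lemma tsub_le {A B : Submodule K g} {C : Submodule K (g ⊗[K] g)}
    (h : ∀ a ∈ A, ∀ b ∈ B, a ⊗ₜ[K] b ∈ C) : tsub K g A B ≤ C := by
  apply Submodule.span_le.mpr
  rintro z ⟨a, ha, b, hb, rfl⟩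
  exact h a ha b hb

lemma tsub_mono {A A' B B' : Submodule K g} (hA : A ≤ A') (hB : B ≤ B') :
    tsub K g A B ≤ tsub K g A' B' :=
  tsub_le fun a ha b hb => tmul_mem_tsub (hA ha) (hB hb)

lemma map_mem_tsub_left {m : Submodule K g} (f f' : g →ₗ[K] g) (hf : ∀ x, f x ∈ m)
    (z : g ⊗[K] g) : TensorProduct.map f f' z ∈ tsub K g m ⊤ := by
  induction z using TensorProduct.induction_on with
  | zero => rw [map_zero]; exact (tsub K g m ⊤).zero_mem
  | tmul a b => rw [TensorProduct.map_tmul]; exact tmul_mem_tsub (hf a) trivial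
  | add x y hx hy => rw [map_add]; exact add_mem hx hy

lemma map_mem_tsub_right {m : Submodule K g} (f f' : g →ₗ[K] g) (hf : ∀ x, f' x ∈ m)
    (z : g ⊗[K] g) : TensorProduct.map f f' z ∈ tsub K g ⊤ m := by
  induction z using TensorProduct.induction_on with
  | zero => rw [map_zero]; exact (tsub K g ⊤ m).zero_mem
  | tmul a b => rw [TensorProduct.map_tmul]; exact tmul_mem_tsub trivial (hf b)
  | add x y hx hy => rw [map_add]; exact add_mem hx hy

lemma mem_tsub_sup_iff (m : Submodule K g) (z : g ⊗[K] g) :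
    z ∈ tsub K g m ⊤ ⊔ tsub K g ⊤ m ↔ TensorProduct.map m.mkQ m.mkQ z = 0 := by
  constructor
  · intro hz
    have h1 : tsub K g m ⊤ ⊔ tsub K g ⊤ m ≤
        LinearMap.ker (TensorProduct.map m.mkQ m.mkQ) := by
      refine sup_le (tsub_le fun a ha b _ => ?_) (tsub_le fun a _ b hb => ?_) <;>
      · rw [LinearMap.mem_ker, TensorProduct.map_tmul]
        first
        | rw [show m.mkQ a = 0 from (Submodule.Quotient.mk_eq_zero m).mpr ha,
            TensorProduct.zero_tmul]
        | rw [show m.mkQ b = 0 from (Submodule.Quotient.mk_eq_zero m).mpr hb,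
            TensorProduct.tmul_zero]
    exact h1 hz
  · intro hz
    obtain ⟨s, hs⟩ := m.mkQ.exists_rightInverse_of_surjective m.range_mkQ
    set P : g →ₗ[K] g := s ∘ₗ m.mkQ with hP
    set idg : g →ₗ[K] g := LinearMap.id with hidg
    have hker : ∀ x : g, (idg - P) x ∈ m := by
      intro x
      have : m.mkQ ((idg - P) x) = 0 := by
        have h0 : m.mkQ (s (m.mkQ x)) = m.mkQ x := LinearMap.congr_fun hs (m.mkQ x)
        simp only [hidg, hP, map_sub, LinearMap.sub_apply, LinearMap.id_apply,
          LinearMap.comp_apply, Submodule.mkQ_apply] at h0 ⊢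
        rw [h0, sub_self]
      rwa [← LinearMap.mem_ker, Submodule.ker_mkQ] at this
    have hdecomp : (TensorProduct.map (idg - P) idg
        + TensorProduct.map P (idg - P) + TensorProduct.map P P :
        g ⊗[K] g →ₗ[K] g ⊗[K] g) = TensorProduct.map idg idg := by
      apply TensorProduct.ext'
      intro x y
      simp only [LinearMap.add_apply, TensorProduct.map_tmul, LinearMap.sub_apply,
        LinearMap.id_apply, TensorProduct.sub_tmul, TensorProduct.tmul_sub]
      abel
    have hz1 : z = TensorProduct.map (idg - P) idg z
        + TensorProduct.map P (idg - P) z + TensorProduct.map P P z := by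
      have := LinearMap.congr_fun hdecomp z
      rw [hidg, TensorProduct.map_id, LinearMap.id_apply] at this
      exact this.symm
    have hPP : TensorProduct.map P P z = 0 := by
      rw [hP, TensorProduct.map_comp, LinearMap.comp_apply, hz, map_zero]
    rw [hz1, hPP, add_zero]
    exact add_mem (le_sup_left (α := Submodule K (g ⊗[K] g))
        (map_mem_tsub_left _ _ hker z))
      (le_sup_right (α := Submodule K (g ⊗[K] g)) (map_mem_tsub_right _ _ hker z))


lemma tensor_eq_zero_of_forall_dual {V W : Type*} [AddCommGroup V] [Module K V]
    [AddCommGroup W] [Module K W] [FiniteDimensional K V] [FiniteDimensional K W]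
    (z : V ⊗[K] W)
    (h : ∀ (φ : Module.Dual K V) (ψ : Module.Dual K W),
      TensorProduct.lid K K (TensorProduct.map φ ψ z) = 0) : z = 0 := by
  set b := Module.finBasis K V with hb
  set c := Module.finBasis K W with hc
  set B := b.tensorProduct c with hB
  have key : ∀ i j, (B.repr z) (i, j) =
      TensorProduct.lid K K (TensorProduct.map (b.coord i) (c.coord j) z) := by
    intro i j
    have heq : (Finsupp.lapply (i, j) ∘ₗ (B.repr : (V ⊗[K] W) →ₗ[K] _))
        = (TensorProduct.lid K K).toLinearMap ∘ₗ TensorProduct.map (b.coord i) (c.coord j) := by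
      apply B.ext
      rintro ⟨k, l⟩
      simp only [LinearMap.comp_apply, Finsupp.lapply_apply, hB,
        Module.Basis.tensorProduct_apply, Module.Basis.repr_self, TensorProduct.map_tmul,
        LinearEquiv.coe_coe, TensorProduct.lid_tmul, Module.Basis.coord_apply,
        Finsupp.single_apply, Prod.mk.injEq, smul_eq_mul]
      by_cases hk : k = i <;> by_cases hl : l = j <;> simp [hk, hl]
    exact LinearMap.congr_fun heq z
  apply B.repr.map_eq_zero_iff.mp
  ext p
  obtain ⟨i, j⟩ := p
  simp [key i j, h]

end Aux

/-- Let `g` be a finite-dimensional Lie bialgebra, `k` a Lie subalgebra of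
    `g`, and `⟨k⊥⟩` the Lie subalgebra of `g*` generated by the annihilator `k⊥`. Then
    `⟨k⊥⟩⊥ ⊆ g` is the maximal subspace of `k` which is both a Lie subalgebra and a Lie
    coideal of `g`. -/
theorem annihilator_of_generated_eq_coisotropic_interior [FiniteDimensional K g]
    (δ : g →ₗ[K] g ⊗[K] g)
    (hskew : ∀ x : g, (TensorProduct.comm K g g) (δ x) = - δ x)
    (hcocycle : ∀ x y : g, δ ⁅x, y⁆ = adT K g x (δ y) - adT K g y (δ x))
    (k : LieSubalgebra K g) :
    letI m : Submodule K g :=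
      (dualLieSpan K g δ (k.toSubmodule.dualAnnihilator)).dualCoannihilator
    -- `m` is contained in `k`, is a Lie subalgebra and a Lie coideal of `g` ...
    (m ≤ k.toSubmodule) ∧
    (∀ x ∈ m, ∀ y ∈ m, ⁅x, y⁆ ∈ m) ∧
    (∀ x ∈ m, δ x ∈ tsub K g m ⊤ ⊔ tsub K g ⊤ m) ∧
    -- ... and it is maximal among such subspaces:
    (∀ p : Submodule K g, p ≤ k.toSubmodule →
      (∀ x ∈ p, ∀ y ∈ p, ⁅x, y⁆ ∈ p) →
      (∀ x ∈ p, δ x ∈ tsub K g p ⊤ ⊔ tsub K g ⊤ p) →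
      p ≤ m) := by
  classical
  set W : Submodule K (Module.Dual K g) :=
    dualLieSpan K g δ (k.toSubmodule.dualAnnihilator) with hWdef
  set m : Submodule K g := W.dualCoannihilator with hmdef
  -- `W` itself belongs to the defining set of the `sInf`
  have hWle : k.toSubmodule.dualAnnihilator ≤ W :=
    le_sInf fun W' hW' => hW'.1
  have hWcl : ∀ f ∈ W, ∀ h ∈ W, dualBracket K g δ f h ∈ W := by
    intro f hf h hh
    rw [hWdef, dualLieSpan, Submodule.mem_sInf] at *
    exact fun W' hW' => hW'.2 f (hf W' hW') h (hh W' hW')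
  have hmem : ∀ x, x ∈ m ↔ ∀ f ∈ W, f x = 0 := by
    intro x; rw [hmdef]; exact Submodule.mem_dualCoannihilator x
  -- Part 1 : m ≤ k
  have part1 : m ≤ k.toSubmodule := by
    intro x hx
    rw [← Subspace.dualAnnihilator_dualCoannihilator_eq (W := k.toSubmodule)]
    rw [Submodule.mem_dualCoannihilator]
    exact fun φ hφ => (hmem x).mp hx φ (hWle hφ)
  -- `m.dualAnnihilator = W` (finite dimension)
  have hmW : m.dualAnnihilator = W := by
    rw [hmdef]; exact Subspace.dualCoannihilator_dualAnnihilator_eq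
  -- Part 3 : m is a Lie coideal
  have part3 : ∀ x ∈ m, δ x ∈ tsub K g m ⊤ ⊔ tsub K g ⊤ m := by
    intro x hx
    rw [mem_tsub_sup_iff]
    apply tensor_eq_zero_of_forall_dual
    intro φ ψ
    have hann : ∀ ρ : Module.Dual K (g ⧸ m), ρ ∘ₗ m.mkQ ∈ W := by
      intro ρ
      rw [← hmW, Submodule.mem_dualAnnihilator]
      intro w hw
      simp [Submodule.mkQ_apply, (Submodule.Quotient.mk_eq_zero m).mpr hw]
    have hcomp : TensorProduct.map φ ψ (TensorProduct.map m.mkQ m.mkQ (δ x))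
        = TensorProduct.map (φ ∘ₗ m.mkQ) (ψ ∘ₗ m.mkQ) (δ x) := by
      rw [TensorProduct.map_comp]; rfl
    rw [hcomp]
    have hb : dualBracket K g δ (φ ∘ₗ m.mkQ) (ψ ∘ₗ m.mkQ) ∈ W :=
      hWcl _ (hann φ) _ (hann ψ)
    have := (hmem x).mp hx _ hb
    simpa [dualBracket, LinearMap.comp_apply] using this
  -- Part 2 : m is closed under the bracket
  set n : LieSubalgebra K g := LieSubalgebra.lieSpan K g (m : Set g) with hndef
  have hmn : m ≤ n.toSubmodule := fun x hx => LieSubalgebra.subset_lieSpan hx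
  have hnk : n ≤ k := LieSubalgebra.lieSpan_le.mpr fun x hx => part1 hx
  -- the lie span of the coideal m is a coideal (uses the cocycle identity)
  have hadT : ∀ x ∈ n, ∀ z ∈ (tsub K g n.toSubmodule ⊤ ⊔ tsub K g ⊤ n.toSubmodule),
      adT K g x z ∈ tsub K g n.toSubmodule ⊤ ⊔ tsub K g ⊤ n.toSubmodule := by
    intro x hx z hz
    have hle : tsub K g n.toSubmodule ⊤ ⊔ tsub K g ⊤ n.toSubmodule ≤
        (tsub K g n.toSubmodule ⊤ ⊔ tsub K g ⊤ n.toSubmodule).comap (adT K g x) := by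
      refine sup_le (tsub_le fun a ha b _ => ?_) (tsub_le fun a _ b hb => ?_) <;>
      · rw [Submodule.mem_comap]
        simp only [adT, LinearMap.add_apply, LinearMap.rTensor_tmul,
          LinearMap.lTensor_tmul, LieAlgebra.ad_apply]
        first
        | exact add_mem
            (le_sup_left (α := Submodule K (g ⊗[K] g))
              (tmul_mem_tsub (n.lie_mem hx ha) trivial))
            (le_sup_left (α := Submodule K (g ⊗[K] g)) (tmul_mem_tsub ha trivial))
        | exact add_mem
            (le_sup_right (α := Submodule K (g ⊗[K] g)) (tmul_mem_tsub trivial hb))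
            (le_sup_right (α := Submodule K (g ⊗[K] g))
              (tmul_mem_tsub trivial (n.lie_mem hx hb)))
    exact hle hz
  have hncoideal : ∀ x ∈ n, δ x ∈ tsub K g n.toSubmodule ⊤ ⊔ tsub K g ⊤ n.toSubmodule := by
    have hS : n ≤ ({
        toSubmodule := n.toSubmodule ⊓
          (tsub K g n.toSubmodule ⊤ ⊔ tsub K g ⊤ n.toSubmodule).comap δ
        lie_mem' := by
          rintro x y ⟨hx1, hx2⟩ ⟨hy1, hy2⟩
          refine ⟨n.lie_mem hx1 hy1, SetLike.mem_coe.mpr (Submodule.mem_comap.mpr ?_)⟩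
          rw [hcocycle x y]
          exact sub_mem
            (hadT x hx1 _ (Submodule.mem_comap.mp (SetLike.mem_coe.mp hy2)))
            (hadT y hy1 _ (Submodule.mem_comap.mp (SetLike.mem_coe.mp hx2))) } :
          LieSubalgebra K g) := by
      apply LieSubalgebra.lieSpan_le.mpr
      intro x hx
      refine ⟨LieSubalgebra.subset_lieSpan hx, ?_⟩
      rw [SetLike.mem_coe, Submodule.mem_comap]
      exact sup_le_sup (tsub_mono hmn le_rfl) (tsub_mono le_rfl hmn) (part3 x hx)
    intro x hx
    exact Submodule.mem_comap.mp (Submodule.mem_inf.mp (hS hx)).2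
  -- W annihilates n
  have hWn : W ≤ n.toSubmodule.dualAnnihilator := by
    apply sInf_le
    refine ⟨Submodule.dualAnnihilator_anti (fun x hx => hnk hx), ?_⟩
    intro f hf h hh
    rw [Submodule.mem_dualAnnihilator] at hf hh ⊢
    intro x hx
    have hker : tsub K g n.toSubmodule ⊤ ⊔ tsub K g ⊤ n.toSubmodule ≤
        LinearMap.ker ((TensorProduct.lid K K).toLinearMap ∘ₗ TensorProduct.map f h) := by
      refine sup_le (tsub_le fun a ha b _ => ?_) (tsub_le fun a _ b hb => ?_) <;>
      · rw [LinearMap.mem_ker, LinearMap.comp_apply, TensorProduct.map_tmul]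
        first
          | rw [hf a ha, TensorProduct.zero_tmul, map_zero]
          | rw [hh b hb, TensorProduct.tmul_zero, map_zero]
    have h0 := hker (hncoideal x hx)
    simpa [dualBracket, LinearMap.mem_ker, LinearMap.comp_apply] using h0
  have part2 : ∀ x ∈ m, ∀ y ∈ m, ⁅x, y⁆ ∈ m := by
    intro x hx y hy
    rw [hmem]
    intro f hf
    have : ⁅x, y⁆ ∈ n := n.lie_mem (hmn hx) (hmn hy)
    exact (Submodule.mem_dualAnnihilator f).mp (hWn hf) _ this
  -- Part 4 : maximality
  have part4 : ∀ p : Submodule K g, p ≤ k.toSubmodule →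
      (∀ x ∈ p, ∀ y ∈ p, ⁅x, y⁆ ∈ p) →
      (∀ x ∈ p, δ x ∈ tsub K g p ⊤ ⊔ tsub K g ⊤ p) → p ≤ m := by
    intro p hpk _ hpco
    have hWp : W ≤ p.dualAnnihilator := by
      apply sInf_le
      refine ⟨Submodule.dualAnnihilator_anti hpk, ?_⟩
      intro f hf h hh
      rw [Submodule.mem_dualAnnihilator] at hf hh ⊢
      intro x hx
      have hker : tsub K g p ⊤ ⊔ tsub K g ⊤ p ≤
          LinearMap.ker ((TensorProduct.lid K K).toLinearMap ∘ₗ TensorProduct.map f h) := by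
        refine sup_le (tsub_le fun a ha b _ => ?_) (tsub_le fun a _ b hb => ?_) <;>
        · rw [LinearMap.mem_ker, LinearMap.comp_apply, TensorProduct.map_tmul]
          first
            | rw [hf a ha, TensorProduct.zero_tmul, map_zero]
            | rw [hh b hb, TensorProduct.tmul_zero, map_zero]
      have h0 := hker (hpco x hx)
      simpa [dualBracket, LinearMap.mem_ker, LinearMap.comp_apply] using h0
    intro x hx
    rw [hmem]
    exact fun f hf => (Submodule.mem_dualAnnihilator f).mp (hWp hf) x hx
  exact ⟨part1, part2, part3, part4⟩

end GQDP
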